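/- Let A, B > 0, κ = B/A, and for each n let I_n(f) = ∑_{k=1}^{L_n} f(x_{n,k}) w_{n,k} be a quadrature rule with nodes x_{n,k} ∈ 𝕋 and complex weights w_{n,k} such that I_n(p) = ∫₀¹ p(x) dx for all p ∈ 𝒯_n and |I_n(g)| ≤ √κ ‖g‖_∞ for every continuous g on 𝕋. If f is a continuous function on 𝕋 whose Fourier coefficients satisfy |f̂(k)| ≤ c e^{-ρ|k|} for all k ∈ ℤ, for some c > 0 and ρ > 0, then there is a constant C > 0 such that |∫₀¹ f(x) dx − I_n(f)| ≤ C e^{-ρn} for all n ≥ 1. -/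

import Mathlib

/-! A quadrature rule that is exact on `p` and has norm at most `K` on continuous functions
errs on `f` by at most `(1 + K) ‖f - p‖_∞`. For `p` the degree-`n` Fourier partial sum of `f`,
the decay `|f̂(l)| ≤ c e^{-ρ|l|}` bounds `‖f - p‖_∞` by the tail `c ∑_{|l| > n} e^{-ρ|l|}`,
and shifting every `|l| > n` by `n` towards `0` shows this tail is `≤ e^{-ρn} c ∑_l e^{-ρ|l|}`. -/

open MeasureTheory AddCircle

noncomputable section

/-- The torus `𝕋 = ℝ/ℤ`. -/
abbrev Torus := UnitAddCircle

/-- Normalized Haar (Lebesgue) probability measure on the torus. -/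
abbrev haar : Measure Torus := AddCircle.haarAddCircle

/-- `p` is a trigonometric polynomial of degree `n`. -/
def IsTrigPoly (n : ℕ) (p : Torus → ℂ) : Prop :=
  ∃ c : ℤ → ℂ, p = fun x => ∑ l ∈ Finset.Icc (-(n : ℤ)) (n : ℤ), c l * fourier l x

theorem norm_integral_sub_quadrature_le_of_exact {X ι : Type*} [TopologicalSpace X]
    [CompactSpace X] [Nonempty X] [MeasurableSpace X] [OpensMeasurableSpace X]
    (μ : Measure X) [IsProbabilityMeasure μ] [Fintype ι] (x : ι → X) (w : ι → ℂ) {K : ℝ}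
    (hK : 0 ≤ K)
    (hbound : ∀ g : X → ℂ, Continuous g → ‖∑ k, g (x k) * w k‖ ≤ K * ⨆ t, ‖g t‖)
    {f p : X → ℂ} (hf : Continuous f) (hp : Continuous p)
    (hexact : ∑ k, p (x k) * w k = ∫ t, p t ∂μ) {M : ℝ} (hM : ∀ t, ‖f t - p t‖ ≤ M) :
    ‖(∫ t, f t ∂μ) - ∑ k, f (x k) * w k‖ ≤ (1 + K) * M := by
  have hint : ∀ {g : X → ℂ}, Continuous g → Integrable g μ := fun hg =>
    hg.integrable_of_hasCompactSupport (.of_compactSpace _)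
  have herror : (∫ t, f t ∂μ) - ∑ k, f (x k) * w k
      = (∫ t, (f - p) t ∂μ) - ∑ k, (f - p) (x k) * w k := by
    simp only [Pi.sub_apply, sub_mul, Finset.sum_sub_distrib, hexact,
      integral_sub (hint hf) (hint hp)]
    ring
  have hintegral : ‖∫ t, (f - p) t ∂μ‖ ≤ M := by
    simpa using norm_integral_le_of_norm_le_const (μ := μ) (.of_forall hM)
  have hquad : ‖∑ k, (f - p) (x k) * w k‖ ≤ K * M :=
    (hbound _ (hf.sub hp)).trans (mul_le_mul_of_nonneg_left (ciSup_le hM) hK)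
  calc ‖(∫ t, f t ∂μ) - ∑ k, f (x k) * w k‖
      ≤ ‖∫ t, (f - p) t ∂μ‖ + ‖∑ k, (f - p) (x k) * w k‖ := herror ▸ norm_sub_le _ _
    _ ≤ M + K * M := add_le_add hintegral hquad
    _ = (1 + K) * M := by ring

theorem norm_sub_sum_fourier_le_tsum_compl {T : ℝ} [Fact (0 < T)] (f : C(AddCircle T, ℂ))
    (hf : Summable fun l => ‖fourierCoeff f l‖) (s : Finset ℤ) (t : AddCircle T) :
    ‖f t - ∑ l ∈ s, fourierCoeff f l * fourier l t‖ ≤ ∑' l : {l // l ∉ s}, ‖fourierCoeff f l‖ := by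
  have hnorm : ∀ l, ‖fourierCoeff f l • fourier l t‖ = ‖fourierCoeff f l‖ := fun l => by
    rw [norm_smul, fourier_apply, Circle.norm_coe, mul_one]
  have hsum : Summable fun l => fourierCoeff f l • fourier l t :=
    .of_norm (by simpa only [hnorm] using hf)
  have htail : f t - ∑ l ∈ s, fourierCoeff f l * fourier l t
      = ∑' l : {l // l ∉ s}, fourierCoeff f l • fourier l t := by
    rw [← (has_pointwise_sum_fourier_series_of_summable hf.of_norm t).tsum_eq,
      ← hsum.sum_add_tsum_subtype_compl s]
    simp only [smul_eq_mul, add_sub_cancel_left]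
  rw [htail]
  refine (norm_tsum_le_tsum_norm ?_).trans_eq ?_ <;> simp only [hnorm]
  exact hf.subtype _

theorem summable_exp_neg_mul_abs_int {ρ : ℝ} (hρ : 0 < ρ) :
    Summable fun l : ℤ => Real.exp (-ρ * |(l : ℝ)|) := by
  have hnat : Summable fun m : ℕ => Real.exp (-ρ * m) := by
    simpa only [mul_comm] using Real.summable_exp_nat_mul_iff.2 (neg_lt_zero.2 hρ)
  exact .of_nat_of_neg (by simpa using hnat) (by simpa using hnat)

theorem tsum_exp_neg_mul_abs_compl_Icc_le {ρ : ℝ} (hρ : 0 < ρ) (n : ℕ) :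
    ∑' l : {l : ℤ // l ∉ Finset.Icc (-(n : ℤ)) n}, Real.exp (-ρ * |(l : ℝ)|)
      ≤ Real.exp (-ρ * n) * ∑' l : ℤ, Real.exp (-ρ * |(l : ℝ)|) := by
  have hout : ∀ l : {l : ℤ // l ∉ Finset.Icc (-(n : ℤ)) n}, (l : ℤ) < -n ∨ n < (l : ℤ) := by
    intro l
    have := l.2
    rw [Finset.mem_Icc] at this
    omega
  let shift : {l : ℤ // l ∉ Finset.Icc (-(n : ℤ)) n} → ℤ :=
    fun l => if 0 ≤ (l : ℤ) then l - n else l + n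
  have hshift_inj : shift.Injective := by
    rintro l l' h
    have := hout l
    have := hout l'
    simp only [shift] at h
    exact Subtype.ext (by split_ifs at h <;> omega)
  have habs_shift : ∀ l : {l : ℤ // l ∉ Finset.Icc (-(n : ℤ)) n},
      |((l : ℤ) : ℝ)| = n + |((shift l : ℤ) : ℝ)| := by
    intro l
    have := hout l
    have habs : |(l : ℤ)| = n + |shift l| := by
      simp only [shift, abs_eq_max_neg]
      split_ifs <;> omega
    exact_mod_cast habs
  have hsum := summable_exp_neg_mul_abs_int hρ
  rw [← tsum_mul_left]
  refine hsum.subtype _ |>.tsum_le_tsum_of_inj shift hshift_inj (fun _ _ => by positivity)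
    (fun l => le_of_eq ?_) (hsum.mul_left _)
  rw [habs_shift, ← Real.exp_add]
  ring_nf

theorem quadrature_error_analytic_general
    (A B : ℝ)
    (L : ℕ → ℕ) (x : ∀ n, Fin (L n) → Torus) (w : ∀ n, Fin (L n) → ℂ)
    (hexact : ∀ n (p : Torus → ℂ), IsTrigPoly n p →
      ∑ k, p (x n k) * w n k = ∫ t, p t ∂haar)
    (hbound : ∀ n (g : Torus → ℂ), Continuous g →
      ‖∑ k, g (x n k) * w n k‖ ≤ Real.sqrt (B / A) * ⨆ t : Torus, ‖g t‖)
    (f : Torus → ℂ) (hf : Continuous f)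
    (c ρ : ℝ) (hc : 0 < c) (hρ : 0 < ρ)
    (hdecay : ∀ k : ℤ, ‖fourierCoeff f k‖ ≤ c * Real.exp (-ρ * |(k : ℝ)|)) :
    ∃ C : ℝ, 0 < C ∧ ∀ n : ℕ, 1 ≤ n →
      ‖(∫ t, f t ∂haar) - ∑ k, f (x n k) * w n k‖ ≤ C * Real.exp (-ρ * n) := by
  have hsum := summable_exp_neg_mul_abs_int hρ
  have hcoeff : Summable fun l => ‖fourierCoeff f l‖ :=
    .of_nonneg_of_le (fun _ => norm_nonneg _) hdecay (hsum.mul_left c)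
  have hpos : 0 < ∑' l : ℤ, Real.exp (-ρ * |(l : ℝ)|) :=
    hsum.tsum_pos (fun _ => (Real.exp_pos _).le) 0 (Real.exp_pos _)
  refine ⟨(1 + √(B / A)) * (c * ∑' l : ℤ, Real.exp (-ρ * |(l : ℝ)|)), by positivity,
    fun n _ => ?_⟩
  let p : Torus → ℂ := fun t => ∑ l ∈ Finset.Icc (-(n : ℤ)) n, fourierCoeff f l * fourier l t
  have hp : Continuous p := by fun_prop
  refine (norm_integral_sub_quadrature_le_of_exact haar (x n) (w n) (Real.sqrt_nonneg _)
    (hbound n) hf hp (hexact n p ⟨_, rfl⟩)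
    (M := c * (Real.exp (-ρ * n) * ∑' l : ℤ, Real.exp (-ρ * |(l : ℝ)|))) fun t => ?_).trans_eq
    (by ring)
  calc ‖f t - p t‖
      ≤ ∑' l : {l : ℤ // l ∉ Finset.Icc (-(n : ℤ)) n}, ‖fourierCoeff f l‖ :=
        norm_sub_sum_fourier_le_tsum_compl ⟨f, hf⟩ hcoeff _ t
    _ ≤ ∑' l : {l : ℤ // l ∉ Finset.Icc (-(n : ℤ)) n}, c * Real.exp (-ρ * |(l : ℝ)|) :=
        (hcoeff.subtype _).tsum_le_tsum (fun l => hdecay l) ((hsum.mul_left c).subtype _)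
    _ ≤ c * (Real.exp (-ρ * n) * ∑' l : ℤ, Real.exp (-ρ * |(l : ℝ)|)) := by
        rw [tsum_mul_left]
        gcongr
        exact tsum_exp_neg_mul_abs_compl_Icc_le hρ n

/-- quadrature rules, exact on `𝒯_n` and bounded by `√κ ‖·‖_∞`,
converge geometrically for a continuous `f` with exponentially decaying Fourier
coefficients: `|∫ f − I_n(f)| ≤ C e^{-ρn}` for all `n ≥ 1`, for some `C > 0`. -/
theorem quadrature_error_analytic
    (A B : ℝ) (hA : 0 < A) (hB : 0 < B)
    (L : ℕ → ℕ) (x : ∀ n, Fin (L n) → Torus) (w : ∀ n, Fin (L n) → ℂ)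
    (hexact : ∀ n (p : Torus → ℂ), IsTrigPoly n p →
      ∑ k, p (x n k) * w n k = ∫ t, p t ∂haar)
    (hbound : ∀ n (g : Torus → ℂ), Continuous g →
      ‖∑ k, g (x n k) * w n k‖ ≤ Real.sqrt (B / A) * ⨆ t : Torus, ‖g t‖)
    (f : Torus → ℂ) (hf : Continuous f)
    (c ρ : ℝ) (hc : 0 < c) (hρ : 0 < ρ)
    (hdecay : ∀ k : ℤ, ‖fourierCoeff f k‖ ≤ c * Real.exp (-ρ * |(k : ℝ)|)) :
    ∃ C : ℝ, 0 < C ∧ ∀ n : ℕ, 1 ≤ n →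
      ‖(∫ t, f t ∂haar) - ∑ k, f (x n k) * w n k‖ ≤ C * Real.exp (-ρ * n) :=
  quadrature_error_analytic_general A B L x w hexact hbound f hf c ρ hc hρ hdecay

end
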